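/- Let B_{d,k} be the Bethe tree with k levels in which every non-leaf vertex has d-1 children (d ≥ 2, k ≥ 1), and let E_j(x,a) denote the Dickson polynomials of the second kind with E_0 = 1, E_1 = x, E_j = x·E_{j-1} - a·E_{j-2}. Then the characteristic polynomial of the adjacency matrix of B_{d,k} equals E_k(x,d-1)·∏_{j=1}^{k-1} E_j(x,d-1)^{(d-2)(d-1)^{k-1-j}}. -/

import Mathlib

open Polynomial

/-- A rooted tree on the vertex set `Fin (n+1)`, encoded by a parent function:
the root is `0`, and every non-root vertex has a parent strictly smaller than
itself (which guarantees acyclicity and connectedness). -/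
structure ParentTree (n : ℕ) where
  parent : Fin (n + 1) → Fin (n + 1)
  parent_lt : ∀ i : Fin (n + 1), i ≠ 0 → parent i < i
  parent_zero : parent 0 = 0

namespace ParentTree

variable {n : ℕ}

/-- The set of children of a vertex. -/
def children (T : ParentTree n) (v : Fin (n + 1)) : Finset (Fin (n + 1)) :=
  Finset.univ.filter fun w => T.parent w = v ∧ w ≠ v

/-- The adjacency matrix of a rooted tree, with entries in `R`. -/
def adjMat (T : ParentTree n) (R : Type) [Zero R] [One R] :
    Matrix (Fin (n + 1)) (Fin (n + 1)) R :=
  Matrix.of fun i j => if i ≠ j ∧ (T.parent i = j ∨ T.parent j = i) then 1 else 0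

/-- The degree of a vertex. -/
def deg (T : ParentTree n) (v : Fin (n + 1)) : ℕ :=
  (T.children v).card + if v = 0 then 0 else 1

end ParentTree

/-- Dickson polynomials of the second kind with parameter `a`. -/
noncomputable def dicksonE (a : ℚ) : ℕ → Polynomial ℚ
  | 0 => 1
  | 1 => Polynomial.X
  | (j + 2) => Polynomial.X * dicksonE a (j + 1) - Polynomial.C a * dicksonE a j

/-!
Over the field `ℚ(X)` the characteristic matrix of a rooted tree factors as `U D Uᵀ`, where
`U = 1 - C D⁻¹` is unitriangular (`C` is the parent-to-child incidence matrix) and `D` is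
diagonal with entries satisfying `r_v = X - ∑_{c child of v} 1 / r_c`; hence the characteristic
polynomial is `∏ r_v`. On the Bethe tree `r_v` only depends on the level `j` of `v`, and the
Dickson recursion shows `r = E_{k+1-j} / E_{k-j}`. There are `(d-1)^(j-1)` vertices on level `j`,
and the resulting product of ratios telescopes to the claimed formula.
-/

open Finset Matrix

lemma degree_dicksonE (a : ℚ) : ∀ m, (dicksonE a m).degree = m
  | 0 => by simp [dicksonE]
  | 1 => by simp [dicksonE]
  | m + 2 => by
    have hX : (X * dicksonE a (m + 1)).degree = ↑(m + 2) := by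
      rw [X_mul, degree_mul_X, degree_dicksonE a (m + 1)]; norm_cast
    have hC : (C a * dicksonE a m).degree < ↑(m + 2) :=
      calc (C a * dicksonE a m).degree ≤ (dicksonE a m).degree :=
            (degree_mul_le _ _).trans (by simpa using add_le_add_left degree_C_le _)
        _ < ↑(m + 2) := by rw [degree_dicksonE a m]; norm_cast; omega
    rw [dicksonE, degree_sub_eq_left_of_degree_lt (hX ▸ hC), hX]

lemma dicksonE_ne_zero (a : ℚ) (m : ℕ) : dicksonE a m ≠ 0 := fun h => by
  simpa [h] using degree_dicksonE a m

lemma prod_Icc_div_pow_eq {K : Type} [Field K] (e : ℕ → K) (he0 : e 0 = 1)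
    (he : ∀ j, e j ≠ 0) {m k : ℕ} (hm : 1 ≤ m) (hk : 1 ≤ k) :
    ∏ j ∈ Icc 1 k, (e (k + 1 - j) / e (k - j)) ^ m ^ (j - 1) =
      e k * ∏ j ∈ Icc 1 (k - 1), e j ^ ((m - 1) * m ^ (k - 1 - j)) := by
  have hrange : ∏ j ∈ Icc 1 k, (e (k + 1 - j) / e (k - j)) ^ m ^ (j - 1) =
      ∏ i ∈ range k, (e (k - i) / e (k - 1 - i)) ^ m ^ i := by
    rw [← Ico_add_one_right_eq_Icc, prod_Ico_eq_prod_range, Nat.add_sub_cancel]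
    refine prod_congr rfl fun i _ => ?_
    rw [show k + 1 - (1 + i) = k - i by omega, show k - (1 + i) = k - 1 - i by omega,
      Nat.add_sub_cancel_left]
  rw [hrange]
  clear hrange
  -- Both sides `Q k` satisfy `Q (k + 1) = Q k ^ m * (e (k + 1) / e k)`.
  induction k, hk using Nat.le_induction with
  | base => simp [he0]
  | succ k hk ih =>
    have hleft : ∏ i ∈ range (k + 1), (e (k + 1 - i) / e (k + 1 - 1 - i)) ^ m ^ i =
        (∏ i ∈ range k, (e (k - i) / e (k - 1 - i)) ^ m ^ i) ^ m * (e (k + 1) / e k) := by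
      rw [prod_range_succ', ← prod_pow]
      congr 1
      · refine prod_congr rfl fun i _ => ?_
        rw [← pow_mul, ← pow_succ, show k + 1 - (i + 1) = k - i by omega,
          show k + 1 - 1 - (i + 1) = k - 1 - i by omega]
      · simp
    have hright : ∏ j ∈ Icc 1 k, e j ^ ((m - 1) * m ^ (k - j)) =
        (∏ j ∈ Icc 1 (k - 1), e j ^ ((m - 1) * m ^ (k - 1 - j))) ^ m * e k ^ (m - 1) := by
      obtain ⟨k, rfl⟩ : ∃ k', k = k' + 1 := ⟨k - 1, by omega⟩
      rw [prod_Icc_succ_top (by omega), ← prod_pow, Nat.add_sub_cancel, Nat.sub_self, pow_zero,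
        mul_one]
      congr 1
      refine prod_congr rfl fun j hj => ?_
      rw [← pow_mul, show k + 1 - j = (k - j) + 1 by have := (mem_Icc.1 hj).2; omega, pow_succ,
        Nat.mul_assoc]
    rw [hleft, ih, Nat.add_sub_cancel, hright]
    obtain ⟨m, rfl⟩ : ∃ m', m = m' + 1 := ⟨m - 1, by omega⟩
    simp only [Nat.add_sub_cancel]
    field_simp [he k]
    ring

namespace ParentTree

variable {n : ℕ} (T : ParentTree n)

lemma mem_children {v w : Fin (n + 1)} : w ∈ T.children v ↔ T.parent w = v ∧ w ≠ v := by
  simp [children]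

lemma lt_of_mem_children {v w : Fin (n + 1)} (h : w ∈ T.children v) : v < w := by
  obtain ⟨rfl, hne⟩ := (T.mem_children).1 h
  exact T.parent_lt w fun h0 => hne (h0 ▸ T.parent_zero.symm)

lemma adjMat_map {R S : Type} [Semiring R] [Semiring S]
    (f : R →+* S) : (T.adjMat R).map f = T.adjMat S := by
  ext v w
  simp only [map_apply, adjMat, of_apply]
  split_ifs <;> simp

lemma algebraMap_charpoly_adjMat :
    algebraMap ℚ[X] (RatFunc ℚ) (T.adjMat ℚ).charpoly =
      (scalar (Fin (n + 1)) RatFunc.X - T.adjMat (RatFunc ℚ)).det := by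
  conv_lhs => rw [← eval₂_C_X (p := (T.adjMat ℚ).charpoly)]
  rw [hom_eval₂, RatFunc.algebraMap_comp_C, RatFunc.algebraMap_X, ← eval_map, ← charpoly_map,
    T.adjMat_map, eval_charpoly]

def childMat (R : Type) [Zero R] [One R] : Matrix (Fin (n + 1)) (Fin (n + 1)) R :=
  Matrix.of fun v w => if w ∈ T.children v then 1 else 0

lemma adjMat_eq_childMat_add_transpose (R : Type) [AddMonoidWithOne R] :
    T.adjMat R = T.childMat R + (T.childMat R)ᵀ := by
  ext v w
  have hcond : (v ≠ w ∧ (T.parent v = w ∨ T.parent w = v)) ↔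
      w ∈ T.children v ∨ v ∈ T.children w := by
    rw [T.mem_children, T.mem_children]; grind
  have hvw : w ∈ T.children v → v ∉ T.children w := fun h h' =>
    (T.lt_of_mem_children h).not_gt (T.lt_of_mem_children h')
  simp only [adjMat, childMat, of_apply, Matrix.add_apply, transpose_apply, hcond]
  by_cases h₁ : w ∈ T.children v <;> by_cases h₂ : v ∈ T.children w <;> simp_all

lemma childMat_mul_diagonal_mul_transpose {R : Type} [CommSemiring R] (x : Fin (n + 1) → R) :
    T.childMat R * diagonal x * (T.childMat R)ᵀ =
      diagonal fun v => ∑ c ∈ T.children v, x c := by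
  ext v w
  rw [mul_apply]
  simp only [mul_diagonal, transpose_apply, childMat, of_apply, ite_mul, one_mul, zero_mul,
    mul_ite, mul_one, mul_zero, ← sum_filter]
  rcases eq_or_ne v w with rfl | hvw
  · simp
  · rw [diagonal_apply_ne _ hvw, sum_eq_zero]
    simp only [mem_filter, T.mem_children]
    rintro c ⟨⟨-, rfl, -⟩, hcv, -⟩
    exact absurd hcv.symm hvw

lemma childMat_blockTriangular (R : Type) [Zero R] [One R] :
    (T.childMat R).BlockTriangular id := fun v w hwv => by
  simp only [childMat, of_apply, ite_eq_right_iff]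
  exact fun h => absurd (T.lt_of_mem_children h) hwv.not_gt

theorem det_scalar_sub_adjMat_eq_prod {K : Type} [Field K] (x : K) (r : Fin (n + 1) → K)
    (hr0 : ∀ v, r v ≠ 0) (hr : ∀ v, r v + ∑ c ∈ T.children v, (r c)⁻¹ = x) :
    (scalar (Fin (n + 1)) x - T.adjMat K).det = ∏ v, r v := by
  set C := T.childMat K
  set D := diagonal r
  set D' := diagonal fun v => (r v)⁻¹
  have hD'D : D' * D = 1 := by simp [D, D', diagonal_mul_diagonal, hr0]
  have hDD' : ∀ M, D * (D' * M) = M := fun M => by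
    rw [← Matrix.mul_assoc, diagonal_mul_diagonal]; simp [hr0]
  have hD'T : D'ᵀ = D' := diagonal_transpose _
  have hU : (1 - C * D').det = 1 := by
    rw [det_of_isUpperTriangular (blockTriangular_one.sub
      ((T.childMat_blockTriangular K).mul (blockTriangular_diagonal _)))]
    refine prod_eq_one fun v _ => ?_
    simp [childMat, children]
  have hfactor : scalar (Fin (n + 1)) x - T.adjMat K = (1 - C * D') * D * (1 - C * D')ᵀ := by
    calc scalar (Fin (n + 1)) x - T.adjMat K
        = D + C * D' * Cᵀ - (C + Cᵀ) := by
          rw [T.childMat_mul_diagonal_mul_transpose, ← T.adjMat_eq_childMat_add_transpose,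
            diagonal_add, scalar_apply]
          simp only [hr]
      _ = (1 - C * D') * D * (1 - C * D')ᵀ := by
          simp only [transpose_sub, transpose_one, transpose_mul, hD'T, sub_mul,
            mul_sub, one_mul, mul_one, Matrix.mul_assoc, hD'D, hDD']
          abel
  rw [hfactor, det_mul, det_mul, det_transpose, hU, det_diagonal, one_mul, mul_one]

variable (lvl : Fin (n + 1) → ℕ)

lemma lvl_of_mem_children (hlvl : ∀ v, v ≠ 0 → lvl v = lvl (T.parent v) + 1)
    {v c : Fin (n + 1)} (hc : c ∈ T.children v) : lvl c = lvl v + 1 := by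
  rw [hlvl c (T.lt_of_mem_children hc).ne_bot, ((T.mem_children).1 hc).1]

lemma one_le_lvl (hlvl0 : lvl 0 = 1) (hlvl : ∀ v, v ≠ 0 → lvl v = lvl (T.parent v) + 1)
    (v : Fin (n + 1)) : 1 ≤ lvl v := by
  by_cases hv : v = 0
  · rw [hv, hlvl0]
  · rw [hlvl v hv]; omega

lemma filter_lvl_eq_one (hlvl0 : lvl 0 = 1)
    (hlvl : ∀ v, v ≠ 0 → lvl v = lvl (T.parent v) + 1) :
    ({v | lvl v = 1} : Finset (Fin (n + 1))) = {0} := by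
  ext v
  simp only [mem_filter, mem_univ, true_and, mem_singleton]
  refine ⟨fun h => by_contra fun hv => ?_, fun h => h ▸ hlvl0⟩
  have := T.one_le_lvl lvl hlvl0 hlvl (T.parent v)
  rw [hlvl v hv] at h
  omega

lemma filter_lvl_eq_succ (hlvl0 : lvl 0 = 1)
    (hlvl : ∀ v, v ≠ 0 → lvl v = lvl (T.parent v) + 1) {j : ℕ} (hj : 1 ≤ j) :
    ({v | lvl v = j + 1} : Finset (Fin (n + 1))) =
      ({v | lvl v = j} : Finset (Fin (n + 1))).biUnion T.children := by
  ext c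
  simp only [mem_biUnion, mem_filter, mem_univ, true_and]
  constructor
  · intro hc
    have hc0 : c ≠ 0 := by rintro rfl; omega
    refine ⟨T.parent c, by have := hlvl c hc0; omega, ?_⟩
    exact (T.mem_children).2 ⟨rfl, (T.parent_lt c hc0).ne'⟩
  · rintro ⟨v, rfl, hcv⟩
    exact T.lvl_of_mem_children lvl hlvl hcv

lemma card_filter_lvl_eq {m k : ℕ} (hlvl0 : lvl 0 = 1)
    (hlvl : ∀ v, v ≠ 0 → lvl v = lvl (T.parent v) + 1)
    (hbranch : ∀ v, lvl v < k → #(T.children v) = m) {j : ℕ} (hj : 1 ≤ j) (hjk : j ≤ k) :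
    #({v | lvl v = j} : Finset (Fin (n + 1))) = m ^ (j - 1) := by
  induction j, hj using Nat.le_induction with
  | base => simp [T.filter_lvl_eq_one lvl hlvl0 hlvl]
  | succ j hj ih =>
    have hdisj : (({v | lvl v = j} : Finset (Fin (n + 1))) : Set (Fin (n + 1))).PairwiseDisjoint
        T.children := fun v _ w _ hvw => disjoint_left.2 fun c hcv hcw =>
      hvw (((T.mem_children).1 hcv).1.symm.trans ((T.mem_children).1 hcw).1)
    rw [T.filter_lvl_eq_succ lvl hlvl0 hlvl hj, card_biUnion hdisj,
      sum_congr rfl fun v hv => hbranch v (by rw [(mem_filter.1 hv).2]; omega), sum_const,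
      ih (by omega), smul_eq_mul, ← pow_succ, Nat.sub_add_comm hj]

lemma prod_comp_lvl {M : Type} [CommMonoid M] (f : ℕ → M) {m k : ℕ} (hlvl0 : lvl 0 = 1)
    (hlvl : ∀ v, v ≠ 0 → lvl v = lvl (T.parent v) + 1) (hle : ∀ v, lvl v ≤ k)
    (hbranch : ∀ v, lvl v < k → #(T.children v) = m) :
    ∏ v, f (lvl v) = ∏ j ∈ Icc 1 k, f j ^ m ^ (j - 1) := by
  rw [← prod_fiberwise_of_maps_to fun v _ => mem_Icc.2 ⟨T.one_le_lvl lvl hlvl0 hlvl v, hle v⟩]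
  refine prod_congr rfl fun j hj => ?_
  rw [prod_congr rfl fun v hv => congrArg f (mem_filter.1 hv).2, prod_const,
    T.card_filter_lvl_eq lvl hlvl0 hlvl hbranch (mem_Icc.1 hj).1 (mem_Icc.1 hj).2]

theorem det_scalar_sub_adjMat_eq_of_levels {K : Type} [Field K] (x : K) (e : ℕ → K)
    {m k : ℕ} (he0 : e 0 = 1) (he1 : e 1 = x) (hrec : ∀ s, e (s + 2) = x * e (s + 1) - m * e s)
    (he : ∀ j, e j ≠ 0) (hm : 1 ≤ m) (hk : 1 ≤ k) (hlvl0 : lvl 0 = 1)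
    (hlvl : ∀ v, v ≠ 0 → lvl v = lvl (T.parent v) + 1) (hle : ∀ v, lvl v ≤ k)
    (hbranch : ∀ v, lvl v < k → #(T.children v) = m)
    (hleaf : ∀ v, lvl v = k → #(T.children v) = 0) :
    (scalar (Fin (n + 1)) x - T.adjMat K).det =
      e k * ∏ j ∈ Icc 1 (k - 1), e j ^ ((m - 1) * m ^ (k - 1 - j)) := by
  set ρ : ℕ → K := fun j => e (k + 1 - j) / e (k - j)
  have hρ : ∀ v, ρ (lvl v) + ∑ c ∈ T.children v, (ρ (lvl c))⁻¹ = x := by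
    intro v
    rcases (hle v).lt_or_eq with hlt | heq
    · rw [sum_congr rfl fun c hc => by rw [T.lvl_of_mem_children lvl hlvl hc], sum_const,
        hbranch v hlt, nsmul_eq_mul]
      obtain ⟨s, hs⟩ : ∃ s, k - lvl v = s + 1 := ⟨k - lvl v - 1, by omega⟩
      simp only [ρ, show k + 1 - lvl v = s + 2 by omega, hs,
        show k + 1 - (lvl v + 1) = s + 1 by omega, show k - (lvl v + 1) = s by omega, hrec]
      field_simp [he]
      ring
    · rw [card_eq_zero.1 (hleaf v heq), sum_empty, add_zero]
      simp [ρ, heq, he0, he1]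
  have hρ0 : ∀ j, ρ j ≠ 0 := fun j => div_ne_zero (he _) (he _)
  rw [T.det_scalar_sub_adjMat_eq_prod x (fun v => ρ (lvl v)) (fun v => hρ0 _) hρ,
    T.prod_comp_lvl lvl ρ hlvl0 hlvl hle hbranch, prod_Icc_div_pow_eq e he0 he hm hk]

end ParentTree

theorem stmt_11 {n : ℕ} (T : ParentTree n)
    (lvl : Fin (n + 1) → ℕ)
    (hlvl0 : lvl 0 = 1)
    (hlvl : ∀ v, v ≠ 0 → lvl v = lvl (T.parent v) + 1)
    (d k : ℕ) (hd : 2 ≤ d) (hk : 1 ≤ k)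
    (hle : ∀ v, lvl v ≤ k)
    (hbethe : ∀ v, lvl v < k → (T.children v).card = d - 1)
    (hleaf : ∀ v, lvl v = k → (T.children v).card = 0) :
    (T.adjMat ℚ).charpoly =
      dicksonE ((d : ℚ) - 1) k *
        ∏ j ∈ Finset.Icc 1 (k - 1),
          dicksonE ((d : ℚ) - 1) j ^ ((d - 2) * (d - 1) ^ (k - 1 - j)) := by
  set a : ℚ := (d : ℚ) - 1
  have hcast : ((d - 1 : ℕ) : RatFunc ℚ) = algebraMap ℚ (RatFunc ℚ) a := by
    simp [a, Nat.cast_sub (by omega : 1 ≤ d)]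
  apply RatFunc.algebraMap_injective ℚ
  rw [T.algebraMap_charpoly_adjMat, T.det_scalar_sub_adjMat_eq_of_levels lvl RatFunc.X
    (fun j => algebraMap ℚ[X] (RatFunc ℚ) (dicksonE a j)) (by simp [dicksonE])
    (by simp [dicksonE, RatFunc.algebraMap_X]) (fun s => by simp [dicksonE, hcast])
    (fun j => RatFunc.algebraMap_ne_zero (dicksonE_ne_zero a j)) (by omega) hk hlvl0 hlvl hle
    hbethe hleaf]
  simp [map_prod, show d - 2 = d - 1 - 1 by omega]
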